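/- arXiv:1902.06534 — 3 statements merged into one kernel-verified Lean document; each statement's English description precedes it below -/
import Mathlib

section
/- Let K be a field of characteristic p > 0 equipped with a normalized discrete valuation v (a surjective group homomorphism v : K^× → ℤ satisfying v(x+y) ≥ min(v(x), v(y)) whenever x, y, x+y are nonzero). If γ ∈ K^× satisfies p ∤ v(γ), then there exists a finite Galois field extension L/K of degree p whose Galois group is cyclic, such that γ lies in the image of the field norm map N_{L/K} : L^× → K^×. -/
/-!
As `p ∤ v γ`, replacing `γ` by `γ⁻¹` we may assume `v γ < 0`. Then `γ` is not of the form
`b ^ p - b`: if `v b ≥ 0` then `v (b ^ p - b) ≥ 0`, and if `v b < 0` the term `b ^ p` dominates,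
so `v (b ^ p - b) = p * v b`. Hence the Artin–Schreier polynomial `X ^ p - X - γ` is irreducible:
its roots are `x, x + 1, …, x + p - 1` for any one root `x`, so the roots of a monic factor of
degree `0 < d < p` sum to `d * x + n` with `n ∈ ℕ`, and this sum lies in `K`, forcing `x ∈ K`.
The field `L = K[X] / (X ^ p - X - γ)` is then the splitting field of a separable polynomial, of
prime degree `p`, and the norm of the root is `(-1) ^ p * (-γ) = γ`.
-/

open Polynomial

theorem add_natCast_pow_char_sub {R : Type*} [CommRing R] (p : ℕ) [Fact p.Prime] [CharP R p]
    (x : R) (n : ℕ) : (x + n) ^ p - (x + n) = x ^ p - x := by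
  have hn : (n : R) ^ p = n := by rw [← frobenius_def, map_natCast]
  rw [add_pow_char, hn]
  ring

namespace Polynomial

variable {K : Type*} [Field K]

noncomputable def artinSchreier (p : ℕ) (a : K) : K[X] := X ^ p - X - C a

theorem degree_X_add_C_lt_degree_X_pow {p : ℕ} (hp : 1 < p) (a : K) :
    (X + C a).degree < (X ^ p : K[X]).degree := by
  rw [degree_X_pow]; compute_degree; exact_mod_cast hp

theorem natDegree_artinSchreier {p : ℕ} (hp : 1 < p) (a : K) :
    (artinSchreier p a).natDegree = p := by
  rw [artinSchreier, sub_sub, natDegree_sub_eq_left_of_natDegree_lt, natDegree_X_pow]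
  exact natDegree_lt_natDegree (X_add_C_ne_zero a) (degree_X_add_C_lt_degree_X_pow hp a)

theorem monic_artinSchreier {p : ℕ} (hp : 1 < p) (a : K) : (artinSchreier p a).Monic := by
  rw [artinSchreier, sub_sub]
  exact (monic_X_pow p).sub_of_left (degree_X_add_C_lt_degree_X_pow hp a)

theorem finrank_adjoinRoot_artinSchreier {p : ℕ} (hp : 1 < p) (a : K) :
    Module.finrank K (AdjoinRoot (artinSchreier p a)) = p := by
  rw [(AdjoinRoot.powerBasis (monic_artinSchreier hp a).ne_zero).finrank,
    AdjoinRoot.powerBasis_dim, natDegree_artinSchreier hp]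

@[simp]
theorem aeval_artinSchreier {L : Type*} [CommRing L] [Algebra K L] (p : ℕ) (a : K) (x : L) :
    aeval x (artinSchreier p a) = x ^ p - x - algebraMap K L a := by
  simp [artinSchreier]

variable {p : ℕ} [hp : Fact p.Prime] [CharP K p] {L : Type*} [Field L] [Algebra K L]
  {a : K} {x : L}

theorem roots_map_artinSchreier (hx : aeval x (artinSchreier p a) = 0) :
    ((artinSchreier p a).map (algebraMap K L)).roots =
      (Multiset.range p).map (fun n : ℕ ↦ x + n) := by
  have := charP_of_injective_algebraMap (algebraMap K L).injective p
  have hmonic := (monic_artinSchreier hp.out.one_lt a).map (algebraMap K L)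
  have hnodup : ((Multiset.range p).map (fun n : ℕ ↦ x + n)).Nodup :=
    (Multiset.nodup_range p).map_on fun m hm n hn h ↦
      CharP.natCast_injOn_Iio L p (Multiset.mem_range.1 hm) (Multiset.mem_range.1 hn)
        (add_left_cancel h)
  have hle : (Multiset.range p).map (fun n : ℕ ↦ x + n) ≤
      ((artinSchreier p a).map (algebraMap K L)).roots := by
    refine (Multiset.le_iff_subset hnodup).2 fun y hy ↦ ?_
    obtain ⟨n, -, rfl⟩ := Multiset.mem_map.1 hy
    rw [mem_roots hmonic.ne_zero, IsRoot, eval_map_algebraMap, aeval_artinSchreier,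
      add_natCast_pow_char_sub, ← aeval_artinSchreier, hx]
  refine (Multiset.eq_of_le_of_card_le hle ?_).symm
  calc _ ≤ ((artinSchreier p a).map (algebraMap K L)).natDegree := card_roots' _
    _ = _ := by simp [natDegree_map, natDegree_artinSchreier hp.out.one_lt]

theorem splits_map_artinSchreier (hx : aeval x (artinSchreier p a) = 0) :
    ((artinSchreier p a).map (algebraMap K L)).Splits := by
  rw [splits_iff_card_roots, roots_map_artinSchreier hx, natDegree_map,
    natDegree_artinSchreier hp.out.one_lt]
  simp

theorem mem_bot_of_dvd_artinSchreier (hx : aeval x (artinSchreier p a) = 0) {q : K[X]}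
    (hq : q.Monic) (hqf : q ∣ artinSchreier p a) (hq0 : 0 < q.natDegree) (hqp : q.natDegree < p) :
    x ∈ (⊥ : Subalgebra K L) := by
  have hf0 := ((monic_artinSchreier hp.out.one_lt a).map (algebraMap K L)).ne_zero
  have hdvd := map_dvd (algebraMap K L) hqf
  have hsplit := (splits_map_artinSchreier hx).of_dvd hf0 hdvd
  set R := (q.map (algebraMap K L)).roots
  have hcard : R.card = q.natDegree := by
    rw [← hsplit.natDegree_eq_card_roots, natDegree_map]
  have hsum : R.sum ∈ (⊥ : Subalgebra K L) := by
    rw [← neg_neg R.sum, ← hsplit.nextCoeff_eq_neg_sum_roots_of_monic (hq.map _),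
      nextCoeff_map (algebraMap K L).injective]
    exact neg_mem (Subalgebra.algebraMap_mem _ _)
  have hshift : (R.map (· - x)).sum ∈ (⊥ : Subalgebra K L) := by
    refine Subalgebra.multiset_sum_mem _ fun y hy ↦ ?_
    obtain ⟨r, hr, rfl⟩ := Multiset.mem_map.1 hy
    obtain ⟨n, -, rfl⟩ := Multiset.mem_map.1
      (roots_map_artinSchreier hx ▸ Multiset.mem_of_le (roots.le_of_dvd hf0 hdvd) hr)
    simp
  have hd : (q.natDegree : K) ≠ 0 := by
    rw [Ne, CharP.cast_eq_zero_iff K p]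
    exact Nat.not_dvd_of_pos_of_lt hq0 hqp
  have hdx : (q.natDegree : K) • x ∈ (⊥ : Subalgebra K L) := by
    have : (q.natDegree : K) • x = R.sum - (R.map (· - x)).sum := by
      simp [Multiset.sum_map_sub, hcard, Algebra.smul_def]
    exact this ▸ sub_mem hsum hshift
  simpa [hd] using Subalgebra.smul_mem _ hdx (q.natDegree : K)⁻¹

theorem irreducible_artinSchreier (ha : ∀ b : K, b ^ p - b ≠ a) :
    Irreducible (artinSchreier p a) := by
  have hmonic := monic_artinSchreier hp.out.one_lt a
  have hdeg := natDegree_artinSchreier hp.out.one_lt a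
  refine (hmonic.irreducible_iff_lt_natDegree_lt fun h ↦ hp.out.ne_zero ?_).2
    fun q hq hqdeg hqf ↦ ?_
  · simpa [h] using hdeg.symm
  have hdeg_pos : 0 < (artinSchreier p a).degree :=
    natDegree_pos_iff_degree_pos.1 (by rw [hdeg]; exact hp.out.pos)
  obtain ⟨x, hx⟩ := (SplittingField.splits (artinSchreier p a)).exists_eval_eq_zero
    (by rw [degree_map]; exact hdeg_pos.ne')
  rw [eval_map_algebraMap] at hx
  rw [Finset.mem_Ioc, hdeg] at hqdeg
  obtain ⟨b, rfl⟩ := Algebra.mem_bot.1 (mem_bot_of_dvd_artinSchreier hx hq hqf hqdeg.1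
    (hqdeg.2.trans_lt (Nat.div_lt_self hp.out.pos one_lt_two)))
  refine ha b (FaithfulSMul.algebraMap_injective K (SplittingField (artinSchreier p a)) ?_)
  simpa [sub_eq_zero] using hx

theorem norm_root_artinSchreier (a : K) :
    Algebra.norm K (AdjoinRoot.root (artinSchreier p a)) = a := by
  have hmonic := monic_artinSchreier hp.out.one_lt a
  have := Algebra.PowerBasis.norm_gen_eq_coeff_zero_minpoly (AdjoinRoot.powerBasis hmonic.ne_zero)
  rw [AdjoinRoot.minpoly_powerBasis_gen_of_monic hmonic, AdjoinRoot.powerBasis_gen,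
    AdjoinRoot.powerBasis_dim, natDegree_artinSchreier hp.out.one_lt, neg_one_pow_char] at this
  rw [this]
  simp [artinSchreier, coeff_X_pow, hp.out.ne_zero.symm]

theorem isGalois_adjoinRoot_artinSchreier [Fact (Irreducible (artinSchreier p a))] :
    IsGalois K (AdjoinRoot (artinSchreier p a)) := by
  have hmonic := monic_artinSchreier hp.out.one_lt a
  have hroot : aeval (AdjoinRoot.root (artinSchreier p a)) (artinSchreier p a) = 0 := by
    rw [AdjoinRoot.aeval_eq, AdjoinRoot.mk_self]
  have : IsSplittingField K (AdjoinRoot (artinSchreier p a)) (artinSchreier p a) :=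
    ⟨splits_map_artinSchreier hroot, by
      rw [eq_top_iff, ← AdjoinRoot.adjoinRoot_eq_top]
      exact Algebra.adjoin_mono
        (Set.singleton_subset_iff.2 (mem_rootSet.2 ⟨hmonic.ne_zero, hroot⟩))⟩
  refine IsGalois.of_separable_splitting_field (p := artinSchreier p a) ?_
  rw [Separable,
    show derivative (artinSchreier p a) = -1 by simp [artinSchreier, derivative_X_pow]]
  exact isCoprime_one_right.neg_right

end Polynomial

theorem exists_cyclic_extension_with_norm_eq {K : Type} [Field K] {p : ℕ} [hp : Fact p.Prime]
    [CharP K p] {a : K} (ha : ∀ b : K, b ^ p - b ≠ a) :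
    ∃ (L : Type) (_ : Field L) (_ : Algebra K L),
      IsGalois K L ∧ Module.finrank K L = p ∧ IsCyclic (L ≃ₐ[K] L) ∧
        ∃ x : Lˣ, Algebra.norm K (x : L) = a := by
  have := Fact.mk (irreducible_artinSchreier ha)
  have hdeg := finrank_adjoinRoot_artinSchreier hp.out.one_lt a
  have := Module.finite_of_finrank_pos (hdeg ▸ hp.out.pos)
  have hGal : IsGalois K (AdjoinRoot (artinSchreier p a)) := isGalois_adjoinRoot_artinSchreier
  have hnorm := norm_root_artinSchreier (p := p) a
  have hroot : AdjoinRoot.root (artinSchreier p a) ≠ 0 := fun h ↦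
    ha 0 (by simp [← hnorm, h, hp.out.ne_zero])
  exact ⟨_, inferInstance, inferInstance, hGal, hdeg,
    isCyclic_of_prime_card (by rw [IsGalois.card_aut_eq_finrank, hdeg]), Units.mk0 _ hroot, hnorm⟩

theorem map_pow_of_map_mul {M : Type*} [Monoid M] {v : M → ℤ}
    (hv_mul : ∀ x y : M, v (x * y) = v x + v y) (u : M) (n : ℕ) :
    v (u ^ n) = n * v u := by
  induction n with
  | zero => simpa using hv_mul 1 1
  | succ n ih => rw [pow_succ, hv_mul, ih]; push_cast; ring

theorem map_inv_of_map_mul {G : Type*} [Group G] {v : G → ℤ}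
    (hv_mul : ∀ x y : G, v (x * y) = v x + v y) (u : G) :
    v u⁻¹ = -v u := by
  have := hv_mul u u⁻¹
  rw [mul_inv_cancel, ← pow_zero u, map_pow_of_map_mul hv_mul] at this
  omega

theorem map_neg_of_map_mul {R : Type*} [Ring R] {v : Rˣ → ℤ}
    (hv_mul : ∀ x y : Rˣ, v (x * y) = v x + v y) (u : Rˣ) :
    v (-u) = v u := by
  have := map_pow_of_map_mul hv_mul (-u) 2
  rw [neg_sq, map_pow_of_map_mul hv_mul] at this
  omega

theorem pow_sub_self_ne_of_neg_of_not_dvd {K : Type*} [Field K] {v : Kˣ → ℤ} {p : ℕ}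
    (hp : 1 < p)
    (hv_mul : ∀ x y : Kˣ, v (x * y) = v x + v y)
    (hv_ultra : ∀ x y z : Kˣ, (x : K) + (y : K) = (z : K) → min (v x) (v y) ≤ v z)
    {a : Kˣ} (hva : v a < 0) (hpa : ¬ (p : ℤ) ∣ v a) (b : K) : b ^ p - b ≠ a := by
  intro hb
  obtain ⟨β, rfl⟩ : IsUnit b := by
    refine isUnit_iff_ne_zero.2 fun h ↦ a.ne_zero ?_
    simp [← hb, h, (zero_lt_one.trans hp).ne']
  have h₁ := hv_ultra (β ^ p) (-β) a (by push_cast; rw [← hb]; ring)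
  have h₂ := hv_ultra a β (β ^ p) (by push_cast; rw [← hb]; ring)
  rw [map_pow_of_map_mul hv_mul, map_neg_of_map_mul hv_mul] at h₁
  rw [map_pow_of_map_mul hv_mul] at h₂
  rcases lt_or_ge (v β) 0 with hβ | hβ
  · have : (p : ℤ) * v β < v β := by nlinarith [show (1 : ℤ) < p by exact_mod_cast hp]
    exact hpa ⟨v β, by omega⟩
  · have : 0 ≤ (p : ℤ) * v β := by positivity
    omega

theorem norm_from_cyclic_degree_p_extension_general
    (p : ℕ) (hp : p.Prime) (K : Type) [Field K] [CharP K p]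
    (v : Kˣ → ℤ)
    (hv_mul : ∀ x y : Kˣ, v (x * y) = v x + v y)
    (hv_ultra : ∀ x y z : Kˣ, (x : K) + (y : K) = (z : K) → min (v x) (v y) ≤ v z)
    (γ : Kˣ) (hγ : ¬ ((p : ℤ) ∣ v γ)) :
    ∃ (L : Type) (_ : Field L) (_ : Algebra K L),
      IsGalois K L ∧ Module.finrank K L = p ∧ IsCyclic (L ≃ₐ[K] L) ∧
        ∃ x : Lˣ, Algebra.norm K (x : L) = (γ : K) := by
  have := Fact.mk hp
  have hnorm (a : Kˣ) (hva : v a < 0) (hpa : ¬ (p : ℤ) ∣ v a) :=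
    exists_cyclic_extension_with_norm_eq
      (pow_sub_self_ne_of_neg_of_not_dvd hp.one_lt hv_mul hv_ultra hva hpa)
  rcases (show v γ ≠ 0 by rintro h; exact hγ (h ▸ dvd_zero _)).lt_or_gt with hneg | hpos
  · exact hnorm γ hneg hγ
  · obtain ⟨L, _, _, hGal, hdeg, hcyc, x, hx⟩ :=
      hnorm γ⁻¹ (by rw [map_inv_of_map_mul hv_mul]; omega)
        (by rwa [map_inv_of_map_mul hv_mul, dvd_neg])
    have := Module.finite_of_finrank_pos (hdeg ▸ hp.pos)
    refine ⟨L, _, _, hGal, hdeg, hcyc, x⁻¹, ?_⟩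
    rw [Units.val_inv_eq_inv_val, Algebra.norm_inv, hx, Units.val_inv_eq_inv_val, inv_inv]

/-- **Lemma 4.1.** Let `K` be a field of characteristic `p > 0` equipped with a normalized
discrete valuation `v` (a surjective group homomorphism `v : Kˣ → ℤ` satisfying
`v (x + y) ≥ min (v x) (v y)` whenever `x, y, x + y` are nonzero).  If `γ ∈ Kˣ` satisfies
`p ∤ v γ`, then there exists a finite Galois field extension `L/K` of degree `p` with cyclic
Galois group such that `γ` lies in the image of the norm map `N_{L/K} : Lˣ → Kˣ`. -/
theorem norm_from_cyclic_degree_p_extension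
    (p : ℕ) (hp : p.Prime) (K : Type) [Field K] [CharP K p]
    (v : Kˣ → ℤ)
    (hv_mul : ∀ x y : Kˣ, v (x * y) = v x + v y)
    (hv_surj : Function.Surjective v)
    (hv_ultra : ∀ x y z : Kˣ, (x : K) + (y : K) = (z : K) → min (v x) (v y) ≤ v z)
    (γ : Kˣ) (hγ : ¬ ((p : ℤ) ∣ v γ)) :
    ∃ (L : Type) (_ : Field L) (_ : Algebra K L),
      IsGalois K L ∧ Module.finrank K L = p ∧ IsCyclic (L ≃ₐ[K] L) ∧
        ∃ x : Lˣ, Algebra.norm K (x : L) = (γ : K) :=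
  norm_from_cyclic_degree_p_extension_general p hp K v hv_mul hv_ultra γ hγ
end

section
/- Let K be a field of characteristic p > 0 equipped with a normalized discrete valuation v (a surjective group homomorphism v : K^× → ℤ satisfying v(x+y) ≥ min(v(x), v(y)) whenever x, y, x+y are nonzero). Let λ ∈ K^× with v(λ) = 1 and set α = λ^{1−p}·(1 + λ + λ^2 + ⋯ + λ^{p−2}). Then the polynomial X^p − X − α is irreducible over K, the quotient L = K[X]/(X^p − X − α) is a field extension of K of degree p, and λ lies in the image of the norm map N_{L/K} : L^× → K^×. -/
/-!
Write `℘ x = x ^ p - x`. Since `v α = 1 - p` is negative and prime to `p`, `α` is not in `℘ K`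
(if `v c < 0` then `v (℘ c) = p * v c`), so `X ^ p - X - α` is irreducible by Artin–Schreier
theory. For its root `θ` and `c ∈ K` one has `N (θ + c) = ℘ c + α`, and the shape of `α` is
exactly what makes `℘ λ⁻¹ + α = α / λ`; hence `λ = N (θ / (θ + λ⁻¹))`.
-/

open Polynomial

namespace UnitsValuation

variable {K : Type*} [Field K] {v : Kˣ → ℤ}

def toMonoidHom (hv_mul : ∀ x y : Kˣ, v (x * y) = v x + v y) : Kˣ →* Multiplicative ℤ :=
  MonoidHom.mk' (fun x => .ofAdd (v x)) fun x y => by simp [hv_mul]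

theorem map_zpow (hv_mul : ∀ x y : Kˣ, v (x * y) = v x + v y) (x : Kˣ) (n : ℤ) :
    v (x ^ n) = n * v x := by
  simpa [toMonoidHom] using
    congrArg Multiplicative.toAdd (_root_.map_zpow (toMonoidHom hv_mul) x n)

theorem map_pow (hv_mul : ∀ x y : Kˣ, v (x * y) = v x + v y) (x : Kˣ) (n : ℕ) :
    v (x ^ n) = n * v x := by
  simpa using map_zpow hv_mul x n

theorem map_inv (hv_mul : ∀ x y : Kˣ, v (x * y) = v x + v y) (x : Kˣ) : v x⁻¹ = -v x := by
  simpa using map_zpow hv_mul x (-1)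

theorem map_one (hv_mul : ∀ x y : Kˣ, v (x * y) = v x + v y) : v 1 = 0 := by
  simpa using map_pow hv_mul 1 0

theorem map_neg_one (hv_mul : ∀ x y : Kˣ, v (x * y) = v x + v y) : v (-1) = 0 := by
  have h := map_pow hv_mul (-1) 2
  rw [neg_one_sq, map_one hv_mul] at h
  omega

theorem map_neg (hv_mul : ∀ x y : Kˣ, v (x * y) = v x + v y) (x : Kˣ) : v (-x) = v x := by
  rw [← neg_one_mul, hv_mul, map_neg_one hv_mul, zero_add]

theorem map_eq_of_add_eq_of_lt (hv_mul : ∀ x y : Kˣ, v (x * y) = v x + v y)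
    (hv_ultra : ∀ x y z : Kˣ, (x : K) + (y : K) = (z : K) → min (v x) (v y) ≤ v z)
    {x y z : Kˣ} (h : (x : K) + y = z) (hlt : v x < v y) : v z = v x := by
  have hz := hv_ultra x y z h
  have hx := hv_ultra z (-y) x (by rw [Units.val_neg, ← h]; ring)
  rw [map_neg hv_mul] at hx
  omega

theorem exists_eq_sub_one_map_eq_zero (hv_mul : ∀ x y : Kˣ, v (x * y) = v x + v y)
    (hv_ultra : ∀ x y z : Kˣ, (x : K) + (y : K) = (z : K) → min (v x) (v y) ≤ v z)
    {x : Kˣ} (hx : 0 < v x) : ∃ u : Kˣ, (u : K) = x - 1 ∧ v u = 0 := by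
  have hx1 : (x : K) - 1 ≠ 0 := by
    rw [sub_ne_zero, Ne, ← Units.val_one, Units.val_inj]
    rintro rfl
    simp [map_one hv_mul] at hx
  refine ⟨Units.mk0 _ hx1, rfl, ?_⟩
  rw [map_eq_of_add_eq_of_lt hv_mul hv_ultra (x := -1) (y := x)
    (by rw [Units.val_neg, Units.val_one, Units.val_mk0]; ring)
    (by rwa [map_neg_one hv_mul]), map_neg_one hv_mul]

theorem exists_eq_geom_sum_map_eq_zero (hv_mul : ∀ x y : Kˣ, v (x * y) = v x + v y)
    (hv_ultra : ∀ x y z : Kˣ, (x : K) + (y : K) = (z : K) → min (v x) (v y) ≤ v z)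
    {l : Kˣ} (hl : 0 < v l) {n : ℕ} (hn : 0 < n) :
    ∃ u : Kˣ, (u : K) = ∑ i ∈ Finset.range n, (l : K) ^ i ∧ v u = 0 := by
  obtain ⟨u₁, hu₁, hvu₁⟩ := exists_eq_sub_one_map_eq_zero hv_mul hv_ultra hl
  obtain ⟨uₙ, huₙ, hvuₙ⟩ := exists_eq_sub_one_map_eq_zero hv_mul hv_ultra (x := l ^ n)
    (by rw [map_pow hv_mul]; positivity)
  refine ⟨uₙ * u₁⁻¹, ?_, by rw [hv_mul, map_inv hv_mul, hvu₁, hvuₙ, neg_zero, add_zero]⟩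
  have hl1 : (l : K) ≠ 1 := sub_ne_zero.mp (hu₁ ▸ u₁.ne_zero)
  rw [geom_sum_eq hl1, Units.val_mul, Units.val_inv_eq_inv_val, huₙ, hu₁,
    Units.val_pow_eq_pow_val, div_eq_mul_inv]

theorem pow_sub_self_ne (hv_mul : ∀ x y : Kˣ, v (x * y) = v x + v y)
    (hv_ultra : ∀ x y z : Kˣ, (x : K) + (y : K) = (z : K) → min (v x) (v y) ≤ v z)
    {p : ℕ} (hp : 1 < p) {a : Kˣ} (ha : v a < 0) (hpa : ¬ (p : ℤ) ∣ v a) (c : K) :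
    c ^ p - c ≠ a := by
  intro hc
  have hc0 : c ≠ 0 := by
    rintro rfl
    rw [zero_pow (by omega), sub_zero] at hc
    exact a.ne_zero hc.symm
  set u := Units.mk0 c hc0
  have hsum : ((u ^ p : Kˣ) : K) + ((-u : Kˣ) : K) = a := by simpa [u, ← sub_eq_add_neg]
  rcases lt_or_ge (v u) 0 with hu | hu
  · have hlt : v (u ^ p) < v (-u) := by
      rw [map_neg hv_mul, map_pow hv_mul]
      nlinarith
    rw [map_eq_of_add_eq_of_lt hv_mul hv_ultra hsum hlt, map_pow hv_mul] at hpa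
    exact hpa (dvd_mul_right _ _)
  · have hmin := hv_ultra _ _ _ hsum
    rw [map_pow hv_mul, map_neg hv_mul] at hmin
    have : 0 ≤ (p : ℤ) * v u := by positivity
    omega

end UnitsValuation

theorem zpow_one_sub_mul_geom_sum_eq {K : Type*} [Field K] {x : K} (hx : x ≠ 0) {p : ℕ}
    (hp : 0 < p) :
    x ^ ((1 : ℤ) - p) * ∑ i ∈ Finset.range (p - 1), x ^ i =
      x * (x⁻¹ ^ p - x⁻¹ + x ^ ((1 : ℤ) - p) * ∑ i ∈ Finset.range (p - 1), x ^ i) := by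
  obtain ⟨m, rfl⟩ : ∃ m, p = m + 1 := ⟨p - 1, by omega⟩
  rw [Nat.add_sub_cancel, show (1 : ℤ) - (m + 1 : ℕ) = -(m : ℤ) by push_cast; ring, zpow_neg,
    zpow_natCast, inv_pow]
  field_simp
  linear_combination (-x ^ (m + 1)) * geom_sum_mul x m

theorem Algebra.PowerBasis.norm_algebraMap_sub_gen {R S : Type*} [CommRing R] [Ring S]
    [Algebra R S] (pb : PowerBasis R S) (c : R) :
    Algebra.norm R (algebraMap R S c - pb.gen) = (minpoly R pb.gen).eval c := by
  rw [Algebra.norm_eq_matrix_det pb.basis, map_sub, AlgHom.commutes, ← charpoly_leftMulMatrix,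
    Matrix.eval_charpoly, Matrix.algebraMap_eq_diagonal]
  rfl

theorem AdjoinRoot.norm_algebraMap_sub_root {K : Type*} [Field K] {f : K[X]} (hf : f.Monic)
    (c : K) : Algebra.norm K (algebraMap K (AdjoinRoot f) c - root f) = f.eval c := by
  have h := Algebra.PowerBasis.norm_algebraMap_sub_gen (powerBasis hf.ne_zero) c
  rwa [minpoly_powerBasis_gen_of_monic hf, powerBasis_gen] at h

theorem monic_X_pow_sub_X_sub_C {R : Type*} [CommRing R] [Nontrivial R] {n : ℕ} (hn : 1 < n)
    (a : R) : (X ^ n - X - C a : R[X]).Monic := by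
  rw [sub_sub]
  exact monic_X_pow_sub (by rw [degree_X_add_C]; exact_mod_cast hn)

theorem natDegree_X_pow_sub_X_sub_C {R : Type*} [CommRing R] [Nontrivial R] {n : ℕ} (hn : 1 < n)
    (a : R) : (X ^ n - X - C a : R[X]).natDegree = n := by
  rw [sub_sub, natDegree_sub_eq_left_of_natDegree_lt] <;> simp [hn]

theorem finrank_adjoinRoot_X_pow_sub_X_sub_C {K : Type*} [Field K] {n : ℕ} (hn : 1 < n) (a : K) :
    Module.finrank K (AdjoinRoot (X ^ n - X - C a)) = n := by
  rw [(AdjoinRoot.powerBasis (monic_X_pow_sub_X_sub_C hn a).ne_zero).finrank,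
    AdjoinRoot.powerBasis_dim, natDegree_X_pow_sub_X_sub_C hn a]

section ArtinSchreier

variable {K : Type*} [Field K] {p : ℕ} [Fact p.Prime] [CharP K p]

theorem multiset_sum_pow_char_sub_sum {R : Type*} [CommRing R] [CharP R p] {s : Multiset R}
    {b : R} (hs : ∀ r ∈ s, r ^ p - r = b) : s.sum ^ p - s.sum = Multiset.card s • b := by
  have : s.sum ^ p - s.sum = (s.map fun r => r ^ p - r).sum := by
    rw [Multiset.sum_map_sub, Multiset.map_id', multiset_sum_pow_char]
  rw [this, Multiset.map_congr rfl hs, Multiset.map_const', Multiset.sum_replicate]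

/-- The roots of `g` all satisfy `r ^ p - r = a` and `x ↦ x ^ p - x` is additive, so their sum
`-g.nextCoeff ∈ K` satisfies `x ^ p - x = (deg g) * a`; dividing by `deg g ∈ 𝔽ₚˣ` gives a
solution in `K`. -/
theorem exists_pow_sub_self_eq_of_monic_dvd {a : K} {g : K[X]} (hg : g.Monic)
    (hdvd : g ∣ X ^ p - X - C a) (hd : ¬ p ∣ g.natDegree) : ∃ c : K, c ^ p - c = a := by
  let φ := algebraMap K (AlgebraicClosure K)
  have hsplit : (g.map φ).Splits := IsAlgClosed.splits _
  have hroots : ∀ r ∈ (g.map φ).roots, r ^ p - r = φ a := by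
    intro r hr
    have hr : (g.map φ).IsRoot r := (mem_roots (hg.map φ).ne_zero).mp hr
    simpa [sub_eq_zero] using eval_eq_zero_of_dvd_of_eval_eq_zero (Polynomial.map_dvd φ hdvd) hr
  have hcard : Multiset.card (g.map φ).roots = g.natDegree := by
    rw [splits_iff_card_roots.mp hsplit, natDegree_map]
  have hsum : (g.map φ).roots.sum = φ (-g.nextCoeff) := by
    rw [map_neg, ← nextCoeff_map φ.injective,
      hsplit.nextCoeff_eq_neg_sum_roots_of_monic (hg.map φ), neg_neg]
  have key : (-g.nextCoeff) ^ p - (-g.nextCoeff) = g.natDegree * a := by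
    apply φ.injective
    have h := multiset_sum_pow_char_sub_sum hroots
    rw [hsum, hcard] at h
    simpa [nsmul_eq_mul] using h
  have hd0 : (g.natDegree : K) ≠ 0 := by rwa [Ne, CharP.cast_eq_zero_iff K p]
  have hdp : (g.natDegree : K) ^ p = g.natDegree := by rw [← frobenius_def, map_natCast]
  refine ⟨-g.nextCoeff / g.natDegree, ?_⟩
  rw [div_pow, hdp, ← sub_div, key, mul_div_cancel_left₀ _ hd0]

theorem irreducible_X_pow_sub_X_sub_C {a : K} (ha : ∀ c : K, c ^ p - c ≠ a) :
    Irreducible (X ^ p - X - C a) := by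
  have hp : 1 < p := (Fact.out : p.Prime).one_lt
  rw [(monic_X_pow_sub_X_sub_C hp a).irreducible_iff_natDegree]
  refine ⟨ne_of_apply_ne natDegree ?_, fun g q hg hq hgq => ?_⟩
  · rw [natDegree_X_pow_sub_X_sub_C hp a, natDegree_one]
    omega
  by_contra! hdeg
  have hlt : g.natDegree < p := by
    have := natDegree_mul hg.ne_zero hq.ne_zero
    rw [hgq, natDegree_X_pow_sub_X_sub_C hp a] at this
    omega
  obtain ⟨c, hc⟩ := exists_pow_sub_self_eq_of_monic_dvd hg (Dvd.intro q hgq)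
    (Nat.not_dvd_of_pos_of_lt (Nat.pos_of_ne_zero hdeg.1) hlt)
  exact ha c hc

theorem norm_root_add_algebraMap (a c : K) :
    Algebra.norm K (AdjoinRoot.root (X ^ p - X - C a) + algebraMap K _ c) = c ^ p - c + a := by
  have hp : 1 < p := (Fact.out : p.Prime).one_lt
  have hneg : AdjoinRoot.root (X ^ p - X - C a) + algebraMap K _ c =
      algebraMap K _ (-1) * (algebraMap K _ (-c) - AdjoinRoot.root _) := by
    simp only [map_neg, map_one]
    ring
  rw [hneg, map_mul, Algebra.norm_algebraMap, finrank_adjoinRoot_X_pow_sub_X_sub_C hp,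
    AdjoinRoot.norm_algebraMap_sub_root (monic_X_pow_sub_X_sub_C hp a)]
  simp only [eval_sub, eval_pow, eval_X, eval_C, neg_pow c, neg_one_pow_char]
  ring

theorem exists_unit_norm_eq_div {a : K} [Fact (Irreducible (X ^ p - X - C a))] (ha : a ≠ 0)
    {c : K} (hc : c ^ p - c + a ≠ 0) :
    ∃ x : (AdjoinRoot (X ^ p - X - C a))ˣ,
      Algebra.norm K (x : AdjoinRoot (X ^ p - X - C a)) = a / (c ^ p - c + a) := by
  have : Module.Finite K (AdjoinRoot (X ^ p - X - C a)) :=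
    (monic_X_pow_sub_X_sub_C (Fact.out : p.Prime).one_lt a).finite_adjoinRoot
  set θ := AdjoinRoot.root (X ^ p - X - C a)
  have hθ : Algebra.norm K θ = a := by
    simpa [zero_pow (Fact.out : p.Prime).ne_zero] using norm_root_add_algebraMap (p := p) a 0
  have hθ0 : θ ≠ 0 := fun h => ha (by rw [← hθ, h, Algebra.norm_zero])
  have hy : θ + algebraMap K _ c ≠ 0 := fun h => hc (by
    rw [← norm_root_add_algebraMap, h, Algebra.norm_zero])
  refine ⟨Units.mk0 (θ / (θ + algebraMap K _ c)) (div_ne_zero hθ0 hy), ?_⟩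
  rw [Units.val_mk0, eq_div_iff hc, ← norm_root_add_algebraMap a c, ← map_mul,
    div_mul_cancel₀ _ hy, hθ]

end ArtinSchreier

theorem artinSchreier_extension_with_uniformizer_norm_general
    (p : ℕ) (hp : p.Prime) (K : Type) [Field K] [CharP K p]
    (v : Kˣ → ℤ)
    (hv_mul : ∀ x y : Kˣ, v (x * y) = v x + v y)
    (hv_ultra : ∀ x y z : Kˣ, (x : K) + (y : K) = (z : K) → min (v x) (v y) ≤ v z)
    (l : Kˣ) (hl : v l = 1)
    (α : K)
    (hα : α = ((l ^ ((1 : ℤ) - (p : ℤ)) : Kˣ) : K) *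
      ∑ i ∈ Finset.range (p - 1), (l : K) ^ i) :
    Irreducible (X ^ p - X - C α : K[X]) ∧
      IsField (AdjoinRoot (X ^ p - X - C α : K[X])) ∧
      Module.finrank K (AdjoinRoot (X ^ p - X - C α : K[X])) = p ∧
      ∃ x : (AdjoinRoot (X ^ p - X - C α : K[X]))ˣ,
        Algebra.norm K ((x : AdjoinRoot (X ^ p - X - C α : K[X]))) = (l : K) := by
  have : Fact p.Prime := ⟨hp⟩
  obtain ⟨s, hs, hvs⟩ := UnitsValuation.exists_eq_geom_sum_map_eq_zero hv_mul hv_ultra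
    (l := l) (by omega) (Nat.sub_pos_of_lt hp.one_lt)
  have hvα : v (l ^ ((1 : ℤ) - p) * s) = 1 - p := by
    rw [hv_mul, UnitsValuation.map_zpow hv_mul, hl, hvs]
    ring
  have hnoroot : ∀ c : K, c ^ p - c ≠ α := by
    have hpα : ¬ (p : ℤ) ∣ 1 - p := by
      rw [dvd_sub_self_right]
      exact_mod_cast hp.not_dvd_one
    have := UnitsValuation.pow_sub_self_ne hv_mul hv_ultra hp.one_lt
      (by rw [hvα]; linarith [hp.one_lt]) (by rwa [hvα])
    rwa [Units.val_mul, hs, ← hα] at this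
  have hirr := irreducible_X_pow_sub_X_sub_C hnoroot
  have : Fact (Irreducible (X ^ p - X - C α)) := ⟨hirr⟩
  refine ⟨hirr, Field.toIsField _, finrank_adjoinRoot_X_pow_sub_X_sub_C hp.one_lt α, ?_⟩
  have hα0 : α ≠ 0 := fun h => hnoroot 0 (by simp [h, zero_pow hp.ne_zero])
  have key : α = l * ((l : K)⁻¹ ^ p - (l : K)⁻¹ + α) := by
    rw [hα, Units.val_zpow_eq_zpow_val]
    exact zpow_one_sub_mul_geom_sum_eq l.ne_zero hp.pos
  have hc : (l : K)⁻¹ ^ p - (l : K)⁻¹ + α ≠ 0 := fun h => hα0 (by rw [key, h, mul_zero])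
  obtain ⟨x, hx⟩ := exists_unit_norm_eq_div hα0 hc
  exact ⟨x, by rw [hx, div_eq_iff hc, ← key]⟩

/-- Let `K` be a field of characteristic `p > 0` equipped with a normalized discrete
valuation `v`.  Let `λ ∈ Kˣ` with `v λ = 1` and set
`α = λ ^ (1 - p) * (1 + λ + λ ^ 2 + ⋯ + λ ^ (p - 2))`.  Then the Artin–Schreier polynomial
`X ^ p - X - α` is irreducible over `K`, the quotient `L = K[X]/(X ^ p - X - α)` is a field
extension of `K` of degree `p`, and `λ` lies in the image of the norm map
`N_{L/K} : Lˣ → Kˣ`. -/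
theorem artinSchreier_extension_with_uniformizer_norm
    (p : ℕ) (hp : p.Prime) (K : Type) [Field K] [CharP K p]
    (v : Kˣ → ℤ)
    (hv_mul : ∀ x y : Kˣ, v (x * y) = v x + v y)
    (hv_surj : Function.Surjective v)
    (hv_ultra : ∀ x y z : Kˣ, (x : K) + (y : K) = (z : K) → min (v x) (v y) ≤ v z)
    (l : Kˣ) (hl : v l = 1)
    (α : K)
    (hα : α = ((l ^ ((1 : ℤ) - (p : ℤ)) : Kˣ) : K) *
      ∑ i ∈ Finset.range (p - 1), (l : K) ^ i) :
    Irreducible (X ^ p - X - C α : K[X]) ∧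
      IsField (AdjoinRoot (X ^ p - X - C α : K[X])) ∧
      Module.finrank K (AdjoinRoot (X ^ p - X - C α : K[X])) = p ∧
      ∃ x : (AdjoinRoot (X ^ p - X - C α : K[X]))ˣ,
        Algebra.norm K ((x : AdjoinRoot (X ^ p - X - C α : K[X]))) = (l : K) :=
  artinSchreier_extension_with_uniformizer_norm_general p hp K v hv_mul hv_ultra l hl α hα
end

section
/- Let A be a complete discrete valuation ring with fraction field F and residue field k. Let L/F be a finite field extension and let B be the integral closure of A in L; assume B is a discrete valuation ring with residue field l, that the extension is unramified, i.e., a uniformizer of A is also a uniformizer of B, and that the residue field extension l/k is separable. Then for every y ∈ l^× with N_{l/k}(y) = 1, there exists x ∈ B^× whose residue class in l is y and such that N_{L/F}(x) = 1; in other words, the reduction map from the kernel of N_{L/F} : B^× → A^× to the kernel of N_{l/k} : l^× → k^× is surjective. -/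
/-!
Because the extension is unramified and `A` is complete, lifts to `B` of a `k`-basis of `l` form
an `A`-basis of `B` (Nakayama, made effective by successive `π`-adic approximation). In such a
basis the multiplication matrices reduce to those of `l/k`, so `N_{B/A}` and `Tr_{B/A}` reduce to
`N_{l/k}` and `Tr_{l/k}`, and `N_{B/A}` computes `N_{L/F}` on `B`.

Lift `y` to `x₀ ∈ Bˣ`, so that `N(x₀) ≡ 1`. As `l/k` is separable, some `b ∈ B` has unit
trace. The polynomial `N(1 + X b) = det (1 + X M_b)` is `N(b)` times a monic polynomial, and its
derivative at `0` is `Tr(b)`; Hensel's lemma gives `s ∈ 𝔪_A` with `N(1 + s b) = N(x₀)`, and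
`x = x₀ (1 + s b)⁻¹` is the required lift.
-/

open IsLocalRing Polynomial

section Reduction

variable {R S K T ι : Type*} [CommRing R] [CommRing S] [Algebra R S] [CommRing K] [CommRing T]
  [Algebra K T] [Fintype ι] {φ : R →+* K} {ψ : S →+* T}
  {b : Module.Basis ι R S} {c : Module.Basis ι K T}

theorem Module.Basis.repr_map_of_map_basis (hψ : ∀ (r : R) (s : S), ψ (r • s) = φ r • ψ s)
    (hbc : ∀ i, ψ (b i) = c i) (s : S) (i : ι) : c.repr (ψ s) i = φ (b.repr s i) := by
  have hs : ψ s = ∑ i, φ (b.repr s i) • c i := by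
    conv_lhs => rw [← b.sum_repr s]
    simp only [map_sum, hψ, hbc]
  rw [hs, c.repr_sum_self]

theorem Algebra.leftMulMatrix_map_of_map_basis [DecidableEq ι]
    (hψ : ∀ (r : R) (s : S), ψ (r • s) = φ r • ψ s) (hbc : ∀ i, ψ (b i) = c i)
    (s : S) : Algebra.leftMulMatrix c (ψ s) = (Algebra.leftMulMatrix b s).map φ := by
  ext i j
  rw [Matrix.map_apply, Algebra.leftMulMatrix_eq_repr_mul, Algebra.leftMulMatrix_eq_repr_mul,
    ← hbc, ← map_mul, Module.Basis.repr_map_of_map_basis hψ hbc]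

theorem Algebra.map_norm_of_map_basis [DecidableEq ι]
    (hψ : ∀ (r : R) (s : S), ψ (r • s) = φ r • ψ s) (hbc : ∀ i, ψ (b i) = c i)
    (s : S) : φ (Algebra.norm R s) = Algebra.norm K (ψ s) := by
  rw [Algebra.norm_eq_matrix_det b, Algebra.norm_eq_matrix_det c,
    Algebra.leftMulMatrix_map_of_map_basis hψ hbc, RingHom.map_det, RingHom.mapMatrix_apply]

theorem Algebra.map_trace_of_map_basis [DecidableEq ι]
    (hψ : ∀ (r : R) (s : S), ψ (r • s) = φ r • ψ s) (hbc : ∀ i, ψ (b i) = c i)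
    (s : S) : φ (Algebra.trace R S s) = Algebra.trace K T (ψ s) := by
  rw [Algebra.trace_eq_matrix_trace b, Algebra.trace_eq_matrix_trace c,
    Algebra.leftMulMatrix_map_of_map_basis hψ hbc, Matrix.trace, Matrix.trace, map_sum]
  rfl

end Reduction

theorem Submodule.span_range_eq_top_of_forall_eq_sum_add_smul {R M ι : Type*} [CommRing R]
    [AddCommGroup M] [Module R M] {π : R} [IsPrecomplete (Ideal.span {π}) R]
    [IsHausdorff (Ideal.span {π}) M] [Fintype ι] {x : ι → M}
    (h : ∀ m : M, ∃ (a : ι → R) (m' : M), m = ∑ i, a i • x i + π • m') :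
    span R (Set.range x) = ⊤ := by
  choose a next hnext using h
  refine eq_top_iff.2 fun m _ => ?_
  set I := Ideal.span {π}
  let r (k : ℕ) : M := next^[k] m
  let s (k : ℕ) (i : ι) : R := ∑ j ∈ Finset.range k, π ^ j * a (r j) i
  have hm (k : ℕ) : m = ∑ i, s k i • x i + π ^ k • r k := by
    induction k with
    | zero => simp [r, s]
    | succ k ih =>
      rw [ih, hnext (r k)]
      simp only [s, r, Finset.sum_range_succ, add_smul, Finset.sum_add_distrib, smul_add,
        Finset.smul_sum, mul_smul, pow_succ, Function.iterate_succ_apply']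
      abel
  have hs_cauchy (i : ι) {k k' : ℕ} (hk : k ≤ k') :
      s k i ≡ s k' i [SMOD (I ^ k • ⊤ : Submodule R R)] := by
    rw [SModEq.sub_mem, smul_eq_mul, Ideal.mul_top, ← neg_sub, neg_mem_iff,
      ← Finset.sum_Ico_eq_sub _ hk]
    refine Ideal.sum_mem _ fun j hj => Ideal.mul_mem_right _ _ ?_
    exact Ideal.pow_le_pow_right (Finset.mem_Ico.1 hj).1
      (Ideal.pow_mem_pow (Ideal.mem_span_singleton_self π) j)
  choose c hc using fun i => IsPrecomplete.prec inferInstance (hs_cauchy i)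
  suffices m = ∑ i, c i • x i from
    this ▸ sum_mem fun i _ => smul_mem _ _ (subset_span ⟨i, rfl⟩)
  refine IsHausdorff.eq_iff_smodEq (I := I) |>.2 fun k => ?_
  have hdiff : m - ∑ i, c i • x i = ∑ i, (s k i - c i) • x i + π ^ k • r k := by
    conv_lhs => rw [hm k]
    simp only [sub_smul, Finset.sum_sub_distrib]
    abel
  have hs_mem (i : ι) : s k i - c i ∈ I ^ k := by
    simpa [SModEq.sub_mem] using hc i k
  rw [SModEq.sub_mem, hdiff]
  exact add_mem (sum_mem fun i _ => smul_mem_smul (hs_mem i) trivial)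
    (smul_mem_smul (Ideal.pow_mem_pow (Ideal.mem_span_singleton_self π) k) trivial)

theorem Matrix.det_one_add_X_smul_eq_C_det_mul_charpoly {R n : Type*} [CommRing R] [Fintype n]
    [DecidableEq n] {M N : Matrix n n R} (h : M * N = 1) :
    det (1 + (X : R[X]) • M.map C) = C M.det * (-N).charpoly := by
  rw [charpoly, charmatrix, RingHom.map_det, ← det_mul]
  congr 1
  rw [map_neg, sub_neg_eq_add, mul_add, ← map_mul, h, map_one, scalar_apply,
    ← op_smul_eq_mul_diagonal, op_smul_eq_smul, add_comm]
  rfl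

theorem exists_mem_maximalIdeal_norm_one_add_smul_eq {A B : Type*} [CommRing A] [IsLocalRing A]
    [HenselianRing A (maximalIdeal A)] [CommRing B] [Nontrivial B] [Algebra A B] [Module.Free A B]
    [Module.Finite A B] (b : Bˣ) (hb : IsUnit (Algebra.trace A B b)) {c : A}
    (hc : c - 1 ∈ maximalIdeal A) :
    ∃ s ∈ maximalIdeal A, Algebra.norm A (1 + s • (b : B)) = c := by
  classical
  let e := Module.Free.chooseBasis A B
  have : Nonempty (Module.Free.ChooseBasisIndex A B) := e.index_nonempty
  set f := Matrix.det (1 + (X : A[X]) • (Algebra.leftMulMatrix e (b : B)).map C)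
  have hf_eval (s : A) : f.eval s = Algebra.norm A (1 + s • (b : B)) := by
    rw [Algebra.norm_eq_matrix_det e, map_add, map_one, map_smul, eval_det]
    congr 1
    ext i j
    simp [Matrix.one_apply, mul_comm]
  have hf_deriv : (derivative f).eval 0 = Algebra.trace A B b := by
    rw [Matrix.derivative_det_one_add_X_smul, Algebra.trace_eq_matrix_trace e]
  -- `f` is a unit multiple of a monic polynomial, to which Hensel's lemma applies
  obtain ⟨u, hu⟩ := b.isUnit.map (Algebra.norm A)
  set p := (-Algebra.leftMulMatrix e (↑b⁻¹ : B)).charpoly - C (↑u⁻¹ * c)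
  have hp_monic : p.Monic := by
    refine (Matrix.charpoly_monic _).sub_of_left (degree_C_le.trans_lt ?_)
    rw [Matrix.charpoly_degree_eq_dim]
    exact_mod_cast Fintype.card_pos
  have hf : f = C (u : A) * (-Algebra.leftMulMatrix e (↑b⁻¹ : B)).charpoly := by
    rw [hu, Algebra.norm_eq_matrix_det e]
    exact Matrix.det_one_add_X_smul_eq_C_det_mul_charpoly (by rw [← map_mul, b.mul_inv, map_one])
  have hp : p = C (↑u⁻¹ : A) * (f - C c) := by
    rw [hf, mul_sub, ← mul_assoc, ← C_mul, Units.inv_mul, C_1, one_mul, ← C_mul]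
  obtain ⟨s, hs, hs_mem⟩ := HenselianRing.is_henselian (I := maximalIdeal A) p hp_monic 0
    (by
      rw [hp, eval_mul, eval_C, eval_sub, hf_eval, zero_smul, add_zero, map_one, eval_C]
      exact Ideal.mul_mem_left _ _ (by simpa using neg_mem hc))
    (by
      rw [hp, derivative_C_mul, derivative_sub, derivative_C, sub_zero, eval_mul, eval_C, hf_deriv]
      exact ((u⁻¹).isUnit.mul hb).map _)
  refine ⟨s, sub_zero s ▸ hs_mem, ?_⟩
  rw [hp, IsRoot, eval_mul, eval_C, eval_sub, eval_C, hf_eval] at hs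
  simpa [sub_eq_zero] using hs

theorem IsLocalRing.residue_smul_of_isScalarTower {A B : Type*} [CommRing A] [IsLocalRing A]
    [CommRing B] [IsLocalRing B] [Algebra A B] [Algebra (ResidueField A) (ResidueField B)]
    [IsScalarTower A (ResidueField A) (ResidueField B)] (a : A) (b : B) :
    residue B (a • b) = residue A a • residue B b := by
  rw [← ResidueField.algebraMap_eq A, algebraMap_smul]
  exact map_smul (IsScalarTower.toAlgHom A B (ResidueField B)) a b

theorem linearIndependent_of_linearIndependent_residue {A B : Type*} [CommRing A]
    [IsDomain A] [IsDiscreteValuationRing A] [CommRing B] [IsDomain B] [IsLocalRing B]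
    [Algebra A B] [FaithfulSMul A B] [Algebra (ResidueField A) (ResidueField B)]
    [IsScalarTower A (ResidueField A) (ResidueField B)] {ι : Type*} {x : ι → B}
    (hx : LinearIndependent (ResidueField A) (residue B ∘ x)) : LinearIndependent A x := by
  let φ : B →ₗ[A] ResidueField B := (IsScalarTower.toAlgHom A B (ResidueField B)).toLinearMap
  refine Module.IsLocalRing.linearIndependent_of_flat x
    (LinearIndependent.of_comp (φ.liftBaseChange (ResidueField A)) ?_)
  convert hx
  ext i
  simp [φ]

theorem finiteDimensional_residueField {A B : Type*} (F L : Type*) [CommRing A]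
    [IsDomain A] [IsDiscreteValuationRing A] [CommRing B] [IsDomain B] [IsLocalRing B]
    [Algebra A B] [FaithfulSMul A B] [Algebra (ResidueField A) (ResidueField B)]
    [Field F] [Algebra A F] [IsFractionRing A F] [Field L] [Algebra F L] [FiniteDimensional F L]
    [Algebra B L] [Algebra A L] [IsScalarTower A B L] [IsScalarTower A F L]
    [IsLocalization (Algebra.algebraMapSubmonoid B (nonZeroDivisors A)) L]
    [IsScalarTower A (ResidueField A) (ResidueField B)] :
    FiniteDimensional (ResidueField A) (ResidueField B) := by
  let v := Module.Basis.ofVectorSpace (ResidueField A) (ResidueField B)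
  choose lift hlift using residue_surjective (R := B)
  have hind : LinearIndependent A (lift ∘ v) :=
    linearIndependent_of_linearIndependent_residue (by
      simpa [Function.comp_def, hlift] using v.linearIndependent)
  have : Finite _ := (hind.localization_localization F (nonZeroDivisors A) L).finite
  exact Module.Finite.of_basis v

theorem exists_basis_residue_eq {A B : Type*} [CommRing A] [IsDomain A]
    [IsDiscreteValuationRing A] [IsAdicComplete (maximalIdeal A) A] [CommRing B] [IsDomain B]
    [IsLocalRing B] [IsNoetherianRing B] [Algebra A B] [FaithfulSMul A B]
    [Algebra (ResidueField A) (ResidueField B)] [IsScalarTower A (ResidueField A) (ResidueField B)]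
    {π : A} (hπ : Irreducible π) (hπB : maximalIdeal B = Ideal.span {algebraMap A B π})
    {ι : Type*} [Fintype ι] (bl : Module.Basis ι (ResidueField A) (ResidueField B)) :
    ∃ bb : Module.Basis ι A B, ∀ i, residue B (bb i) = bl i := by
  choose lift hlift using residue_surjective (R := B)
  choose liftA hliftA using residue_surjective (R := A)
  have hind : LinearIndependent A (lift ∘ bl) :=
    linearIndependent_of_linearIndependent_residue (by
      simpa [Function.comp_def, hlift] using bl.linearIndependent)
  have : IsPrecomplete (Ideal.span {π}) A := hπ.maximalIdeal_eq ▸ inferInstance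
  have : IsHausdorff (Ideal.span {π}) B :=
    .of_map (J := maximalIdeal B) (by rw [hπB, Ideal.map_span, Set.image_singleton])
  have hspan : Submodule.span A (Set.range (lift ∘ bl)) = ⊤ := by
    refine Submodule.span_range_eq_top_of_forall_eq_sum_add_smul (π := π) fun b => ?_
    let a i := liftA (bl.repr (residue B b) i)
    have hres : residue B (b - ∑ i, a i • lift (bl i)) = 0 := by
      simp only [map_sub, map_sum, residue_smul_of_isScalarTower, hliftA, hlift, a, bl.sum_repr,
        sub_self]
    rw [residue_eq_zero_iff, hπB, Ideal.mem_span_singleton'] at hres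
    obtain ⟨b', hb'⟩ := hres
    exact ⟨a, b', by rw [Algebra.smul_def, mul_comm, hb', Function.comp_def, add_sub_cancel]⟩
  exact ⟨.mk hind hspan.ge, fun i => by simp [hlift]⟩

theorem exists_unit_residue_eq_and_norm_eq_one {A B ι : Type*} [CommRing A] [IsLocalRing A]
    [HenselianRing A (maximalIdeal A)] [CommRing B] [IsLocalRing B] [Algebra A B]
    [Algebra (ResidueField A) (ResidueField B)] [IsScalarTower A (ResidueField A) (ResidueField B)]
    [Algebra.IsSeparable (ResidueField A) (ResidueField B)] [Fintype ι]
    (bb : Module.Basis ι A B) (bl : Module.Basis ι (ResidueField A) (ResidueField B))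
    (hbb : ∀ i, residue B (bb i) = bl i) {y : ResidueField B}
    (hy : Algebra.norm (ResidueField A) y = 1) :
    ∃ x : Bˣ, residue B x = y ∧ Algebra.norm A (x : B) = 1 := by
  classical
  -- Once `B` is known to be finite over `A`, a second `Module (ResidueField A) (ResidueField B)`
  -- instance (through the canonical residue field map) becomes reachable, so the finiteness of
  -- `l/k` for the given algebra structure is recorded first.
  have := Module.Finite.of_basis bl
  have hnorm := Algebra.map_norm_of_map_basis residue_smul_of_isScalarTower hbb
  have htrace := Algebra.map_trace_of_map_basis residue_smul_of_isScalarTower hbb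
  have := Module.Free.of_basis bb
  have := Module.Finite.of_basis bb
  obtain ⟨b, hb⟩ :
      ∃ b : B, Algebra.trace (ResidueField A) (ResidueField B) (residue B b) = 1 := by
    obtain ⟨t, ht⟩ := Algebra.trace_surjective (ResidueField A) (ResidueField B) 1
    obtain ⟨b, rfl⟩ := residue_surjective t
    exact ⟨b, ht⟩
  have hb_unit : IsUnit b := (residue_ne_zero_iff_isUnit b).1 fun h => by simp [h] at hb
  have htr_unit : IsUnit (Algebra.trace A B b) :=
    (residue_ne_zero_iff_isUnit _).1 (by rw [htrace, hb]; exact one_ne_zero)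
  obtain ⟨x₀, rfl⟩ := residue_surjective y
  have hx₀ : IsUnit x₀ := (residue_ne_zero_iff_isUnit x₀).1 fun h => by simp [h] at hy
  obtain ⟨s, hs, hw⟩ := exists_mem_maximalIdeal_norm_one_add_smul_eq hb_unit.unit htr_unit
    (c := Algebra.norm A x₀)
    (by rw [← residue_eq_zero_iff, map_sub, hnorm, hy, map_one, sub_self])
  set w := 1 + s • b
  have hw_res : residue B w = 1 := by
    rw [map_add, map_one, residue_smul_of_isScalarTower, (residue_eq_zero_iff s).2 hs,
      Algebra.smul_def, map_zero, zero_mul, add_zero]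
  have hw_unit : IsUnit w := (residue_ne_zero_iff_isUnit w).1 (by rw [hw_res]; exact one_ne_zero)
  refine ⟨hx₀.unit * hw_unit.unit⁻¹, ?_, ?_⟩
  · simp [hw_res]
  · rw [IsUnit.unit_spec] at hw
    rw [Units.val_mul, map_mul, IsUnit.unit_spec, ← hw, ← map_mul, IsUnit.mul_val_inv, map_one]

/-- Let `A` be a complete discrete valuation ring with fraction field `F` and residue field
`k`.  Let `L/F` be a finite field extension and `B` the integral closure of `A` in `L`;
assume `B` is a discrete valuation ring with residue field `l`, that the extension is
unramified, and that `l/k` is separable.  Then every norm-one unit of `l` lifts to a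
norm-one unit of `B`: for every `y ∈ lˣ` with `N_{l/k}(y) = 1` there is `x ∈ Bˣ` reducing
to `y` with `N_{L/F}(x) = 1`. -/
theorem norm_one_unit_lifts
    (A : Type) [CommRing A] [IsDomain A] [IsDiscreteValuationRing A]
    [IsAdicComplete (maximalIdeal A) A]
    (F : Type) [Field F] [Algebra A F] [IsFractionRing A F]
    (L : Type) [Field L] [Algebra F L] [FiniteDimensional F L]
    (B : Type) [CommRing B] [IsDomain B] [IsDiscreteValuationRing B]
    [Algebra A B] [Algebra B L] [Algebra A L]
    [IsScalarTower A B L] [IsScalarTower A F L]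
    [IsIntegralClosure B A L]
    (hunram : ∃ π : A, Irreducible π ∧ Irreducible (algebraMap A B π))
    [instRF : Algebra (ResidueField A) (ResidueField B)]
    (hcomp : ∀ a : A, algebraMap (ResidueField A) (ResidueField B) (residue A a)
      = residue B (algebraMap A B a))
    [Algebra.IsSeparable (ResidueField A) (ResidueField B)]
    (y : (ResidueField B)ˣ)
    (hy : Algebra.norm (ResidueField A) ((y : ResidueField B)) = 1) :
    ∃ x : Bˣ, residue B ((x : B)) = (y : ResidueField B) ∧
      Algebra.norm F (algebraMap B L ((x : B))) = 1 := by
  obtain ⟨π, hπ, hπB⟩ := hunram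
  have : IsScalarTower A (ResidueField A) (ResidueField B) :=
    .of_algebraMap_eq fun a => (hcomp a).symm
  have : FaithfulSMul A L := .trans A F L
  have : FaithfulSMul A B := .tower_bot A B L
  have : Algebra.IsAlgebraic F L := Algebra.IsAlgebraic.of_finite F L
  have : IsLocalization (Algebra.algebraMapSubmonoid B (nonZeroDivisors A)) L :=
    IsIntegralClosure.isLocalization A F L B
  have : FiniteDimensional (ResidueField A) (ResidueField B) := finiteDimensional_residueField F L
  let bl := Module.finBasis (ResidueField A) (ResidueField B)
  obtain ⟨bb, hbb⟩ := exists_basis_residue_eq hπ hπB.maximalIdeal_eq bl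
  obtain ⟨x, hxy, hx⟩ := exists_unit_residue_eq_and_norm_eq_one bb bl hbb hy
  have := Module.Free.of_basis bb
  have := Module.Finite.of_basis bb
  exact ⟨x, hxy, by rw [Algebra.norm_localization A (nonZeroDivisors A), hx, map_one]⟩
end
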